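/- Let E be a sandpile graph. Then SP(E) is the disjoint union of the archimedean classes of its idempotents: every element of SP(E) is archimedean-equivalent to exactly one idempotent of SP(E). -/
import Mathlib


/-! ### Generic commutative monoid notions -/

/-- The canonical preorder on a commutative monoid: `x ≤ y` iff `y = x + z` for some `z`. -/
def cle {M : Type} [AddCommMonoid M] (x y : M) : Prop := ∃ z, y = x + z

/-- The archimedean equivalence relation on a commutative monoid. -/
def archRel {M : Type} [AddCommMonoid M] (x y : M) : Prop :=
  (∃ m : ℕ, cle x (m • y)) ∧ (∃ n : ℕ, cle y (n • x))

/-- An element `a` is recurrent if it is accessible from every element. -/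
def Recurrent {M : Type} [AddCommMonoid M] (a : M) : Prop := ∀ c, ∃ z, a = c + z

/-- An order-ideal of a commutative monoid: a submonoid `I` with `x + y ∈ I → x ∈ I ∧ y ∈ I`. -/
def IsOrderIdeal {M : Type} [AddCommMonoid M] (I : Set M) : Prop :=
  0 ∈ I ∧ (∀ x ∈ I, ∀ y ∈ I, x + y ∈ I) ∧ ∀ x y : M, x + y ∈ I → x ∈ I ∧ y ∈ I

/-- A subsemigroup which is a group under the induced addition. -/
def IsSubgroupSet {M : Type} [AddCommMonoid M] (S : Set M) : Prop :=
  S.Nonempty ∧ (∀ x ∈ S, ∀ y ∈ S, x + y ∈ S) ∧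
    ∃ e ∈ S, (∀ x ∈ S, e + x = x) ∧ ∀ x ∈ S, ∃ y ∈ S, x + y = e

/-- A maximal subgroup of a commutative monoid. -/
def IsMaximalSubgroup {M : Type} [AddCommMonoid M] (S : Set M) : Prop :=
  IsSubgroupSet S ∧ ∀ T : Set M, IsSubgroupSet T → S ⊆ T → S = T

/-- The defining setoid of the Grothendieck group of a commutative monoid. -/
def grSetoid (M : Type) [AddCommMonoid M] : Setoid (M × M) where
  r p q := ∃ z, p.1 + q.2 + z = p.2 + q.1 + z
  iseqv := by
    constructor
    · exact fun p => ⟨0, by abel⟩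
    · intro p q h
      obtain ⟨z, hz⟩ := h
      exact ⟨z, by
        calc q.1 + p.2 + z = p.2 + q.1 + z := by abel
          _ = p.1 + q.2 + z := hz.symm
          _ = q.2 + p.1 + z := by abel⟩
    · intro p q r h h'
      obtain ⟨z₁, h₁⟩ := h
      obtain ⟨z₂, h₂⟩ := h'
      refine ⟨q.1 + q.2 + z₁ + z₂, ?_⟩
      have h : (p.1 + q.2 + z₁) + (q.1 + r.2 + z₂) = (p.2 + q.1 + z₁) + (q.2 + r.1 + z₂) := by
        rw [h₁, h₂]
      calc p.1 + r.2 + (q.1 + q.2 + z₁ + z₂)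
          = (p.1 + q.2 + z₁) + (q.1 + r.2 + z₂) := by abel
        _ = (p.2 + q.1 + z₁) + (q.2 + r.1 + z₂) := h
        _ = p.2 + r.1 + (q.1 + q.2 + z₁ + z₂) := by abel

/-- The Grothendieck group of a commutative monoid, as a quotient of `M × M`. -/
def GrGroup (M : Type) [AddCommMonoid M] : Type := Quotient (grSetoid M)

/-- Addition on the Grothendieck group. -/
def GrGroup.add {M : Type} [AddCommMonoid M] (p q : GrGroup M) : GrGroup M :=
  Quotient.map₂
    (fun p q => (p.1 + q.1, p.2 + q.2))
    (by
      intro p p' hp q q' hq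
      obtain ⟨z₁, h₁⟩ := hp
      obtain ⟨z₂, h₂⟩ := hq
      refine ⟨z₁ + z₂, ?_⟩
      have h : (p.1 + p'.2 + z₁) + (q.1 + q'.2 + z₂)
          = (p.2 + p'.1 + z₁) + (q.2 + q'.1 + z₂) := by rw [h₁, h₂]
      calc p.1 + q.1 + (p'.2 + q'.2) + (z₁ + z₂)
          = (p.1 + p'.2 + z₁) + (q.1 + q'.2 + z₂) := by abel
        _ = (p.2 + p'.1 + z₁) + (q.2 + q'.1 + z₂) := h
        _ = p.2 + q.2 + (p'.1 + q'.1) + (z₁ + z₂) := by abel)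
    p q

instance {M : Type} [AddCommMonoid M] : Add (GrGroup M) := ⟨GrGroup.add⟩

/-- The defining setoid of the Grothendieck group of a (nonempty, additively closed)
subsemigroup `S` of a commutative monoid. -/
def grSubSetoid {M : Type} [AddCommMonoid M] (S : Set M) (x₀ : M) (hx₀ : x₀ ∈ S)
    (hcl : ∀ a ∈ S, ∀ b ∈ S, a + b ∈ S) : Setoid (S × S) where
  r p q := ∃ z ∈ S, p.1.1 + q.2.1 + z = p.2.1 + q.1.1 + z
  iseqv := by
    constructor
    · exact fun p => ⟨x₀, hx₀, by abel⟩
    · intro p q h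
      obtain ⟨z, hzS, hz⟩ := h
      exact ⟨z, hzS, by
        calc q.1.1 + p.2.1 + z = p.2.1 + q.1.1 + z := by abel
          _ = p.1.1 + q.2.1 + z := hz.symm
          _ = q.2.1 + p.1.1 + z := by abel⟩
    · intro p q r h h'
      obtain ⟨z₁, hz₁S, h₁⟩ := h
      obtain ⟨z₂, hz₂S, h₂⟩ := h'
      refine ⟨q.1.1 + q.2.1 + z₁ + z₂,
        hcl _ (hcl _ (hcl _ q.1.2 _ q.2.2) _ hz₁S) _ hz₂S, ?_⟩
      have h : (p.1.1 + q.2.1 + z₁) + (q.1.1 + r.2.1 + z₂)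
          = (p.2.1 + q.1.1 + z₁) + (q.2.1 + r.1.1 + z₂) := by rw [h₁, h₂]
      calc p.1.1 + r.2.1 + (q.1.1 + q.2.1 + z₁ + z₂)
          = (p.1.1 + q.2.1 + z₁) + (q.1.1 + r.2.1 + z₂) := by abel
        _ = (p.2.1 + q.1.1 + z₁) + (q.2.1 + r.1.1 + z₂) := h
        _ = p.2.1 + r.1.1 + (q.1.1 + q.2.1 + z₁ + z₂) := by abel

/-- Addition on the Grothendieck group of a subsemigroup. -/
def grSubAdd {M : Type} [AddCommMonoid M] {S : Set M} {x₀ : M} {hx₀ : x₀ ∈ S}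
    {hcl : ∀ a ∈ S, ∀ b ∈ S, a + b ∈ S}
    (p q : Quotient (grSubSetoid S x₀ hx₀ hcl)) : Quotient (grSubSetoid S x₀ hx₀ hcl) :=
  Quotient.map₂
    (fun p q => (⟨p.1.1 + q.1.1, hcl _ p.1.2 _ q.1.2⟩, ⟨p.2.1 + q.2.1, hcl _ p.2.2 _ q.2.2⟩))
    (by
      intro p p' hp q q' hq
      obtain ⟨z₁, hz₁S, h₁⟩ := hp
      obtain ⟨z₂, hz₂S, h₂⟩ := hq
      refine ⟨z₁ + z₂, hcl _ hz₁S _ hz₂S, ?_⟩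
      have h : (p.1.1 + p'.2.1 + z₁) + (q.1.1 + q'.2.1 + z₂)
          = (p.2.1 + p'.1.1 + z₁) + (q.2.1 + q'.1.1 + z₂) := by rw [h₁, h₂]
      calc p.1.1 + q.1.1 + (p'.2.1 + q'.2.1) + (z₁ + z₂)
          = (p.1.1 + p'.2.1 + z₁) + (q.1.1 + q'.2.1 + z₂) := by abel
        _ = (p.2.1 + p'.1.1 + z₁) + (q.2.1 + q'.1.1 + z₂) := h
        _ = p.2.1 + q.2.1 + (p'.1.1 + q'.1.1) + (z₁ + z₂) := by abel)
    p q

/-! ### Finite directed graphs and sandpile monoids -/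

/-- A finite directed graph. -/
structure DGraph where
  V : Type
  E : Type
  [fintV : Fintype V]
  [fintE : Fintype E]
  [decV : DecidableEq V]
  [decE : DecidableEq E]
  src : E → V
  rng : E → V

attribute [instance] DGraph.fintV DGraph.fintE DGraph.decV DGraph.decE

namespace DGraph

variable (G : DGraph)

/-- A vertex is a sink if it emits no edges. -/
def IsSink (v : G.V) : Prop := ∀ e : G.E, G.src e ≠ v

/-- One-step reachability along an edge. -/
def Step (u v : G.V) : Prop := ∃ e : G.E, G.src e = u ∧ G.rng e = v

/-- There is a (possibly empty) path from `u` to `v`. -/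
def Reaches (u v : G.V) : Prop := Relation.ReflTransGen G.Step u v

/-- A vertex lies on a cycle iff there is a nontrivial closed path based at it. -/
def OnCycle (v : G.V) : Prop := Relation.TransGen G.Step v v

/-- A sandpile graph: `s` is the unique sink and every vertex reaches `s`. -/
def IsSandpile (s : G.V) : Prop :=
  G.IsSink s ∧ (∀ v : G.V, G.IsSink v → v = s) ∧ ∀ v : G.V, G.Reaches v s

/-- The set of edges emitted by `v`. -/
def outEdges (v : G.V) : Finset G.E := Finset.univ.filter fun e => G.src e = v

/-- A hereditary subset of vertices. -/
def Hereditary (H : Finset G.V) : Prop := ∀ e : G.E, G.src e ∈ H → G.rng e ∈ H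

/-- A saturated subset of vertices. -/
def Saturated (H : Finset G.V) : Prop :=
  ∀ v : G.V, ¬ G.IsSink v → (∀ e : G.E, G.src e = v → G.rng e ∈ H) → v ∈ H

/-- The restriction graph `E_H` of a hereditary subset `H`. -/
def restrict (H : Finset G.V) (hher : G.Hereditary H) : DGraph where
  V := {v : G.V // v ∈ H}
  E := {e : G.E // G.src e ∈ H}
  src e := ⟨G.src e.1, e.2⟩
  rng e := ⟨G.rng e.1, hher e.1 e.2⟩

/-- The defining relations of the sandpile monoid: `s = 0` and, for each non-sink
vertex `v`, `|s⁻¹(v)|·v = Σ_{e ∈ s⁻¹(v)} r(e)`. -/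
def spRel (s : G.V) : Multiset G.V → Multiset G.V → Prop := fun a b =>
  (a = {s} ∧ b = 0) ∨
    ∃ v : G.V, ¬ G.IsSink v ∧ a = Multiset.replicate (G.outEdges v).card v ∧
      b = (G.outEdges v).val.map G.rng

/-- The congruence on the free commutative monoid `Multiset G.V` generated by the
sandpile relations. -/
def spCon (s : G.V) : AddCon (Multiset G.V) := addConGen (G.spRel s)

/-- The sandpile monoid `SP(E)`. -/
abbrev SP (s : G.V) : Type := (G.spCon s).Quotient

/-- The class in `SP(E)` of an element of the free commutative monoid on the vertices. -/
def spMk (s : G.V) (a : Multiset G.V) : G.SP s := (G.spCon s).mk' a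

/-- The one-step toppling/reduction relation `→₁` on the free commutative monoid. -/
def step1 (s : G.V) : Multiset G.V → Multiset G.V → Prop := fun a b =>
  (s ∈ a ∧ b = a.filter fun v => v ≠ s) ∨
    ∃ v : G.V, ¬ G.IsSink v ∧ (G.outEdges v).card ≤ a.count v ∧
      b = (a - Multiset.replicate (G.outEdges v).card v) + (G.outEdges v).val.map G.rng

/-- The reflexive transitive closure `→` of `→₁`. -/
def Transforms (s : G.V) : Multiset G.V → Multiset G.V → Prop :=
  Relation.ReflTransGen (G.step1 s)

/-- The image in `SP(E)` of the canonical embedding of `SP(E_H)`: classes of multisets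
supported in `H`. -/
def spImage (s : G.V) (H : Finset G.V) : Set (G.SP s) :=
  Set.range fun a : Multiset {v : G.V // v ∈ H} => G.spMk s (a.map Subtype.val)

open Classical in
/-- The set `S_E` of vertices from which no cycle is reachable. -/
noncomputable def sinkSet : Finset G.V :=
  Finset.univ.filter fun v => ¬ ∃ u, G.Reaches v u ∧ G.OnCycle u

/-- Mutual reachability. -/
def MutReach (u v : G.V) : Prop := G.Reaches u v ∧ G.Reaches v u

open Classical in
/-- The strongly connected component of a vertex. -/
noncomputable def scc (v : G.V) : Finset G.V := Finset.univ.filter fun u => G.MutReach v u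

/-- The set `𝓒_E` of (vertex sets of) strongly connected cyclic components. -/
def cyclicComps : Set (Finset G.V) := {C | ∃ v : G.V, G.OnCycle v ∧ C = G.scc v}

/-- The order on components: `C ≤ C'` iff there is a path from a vertex of `C` to a
vertex of `C'`. -/
def compLe (C C' : Finset G.V) : Prop := ∃ u ∈ C, ∃ w ∈ C', G.Reaches u w

/-- A filter of the poset `𝓒_E`. -/
def IsFilter (F : Set (Finset G.V)) : Prop :=
  F ⊆ G.cyclicComps ∧ ∀ C ∈ F, ∀ C' ∈ G.cyclicComps, G.compLe C C' → C' ∈ F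

open Classical in
/-- The hereditary saturated closure of a set of vertices: the intersection (hence the
smallest) of all saturated hereditary subsets containing it. -/
noncomputable def hsClosure (X : Finset G.V) : Finset G.V :=
  Finset.univ.filter fun v =>
    ∀ H : Finset G.V, G.Hereditary H → G.Saturated H → X ⊆ H → v ∈ H

open Classical in
/-- The union of a collection of components, as a finset of vertices. -/
noncomputable def compUnion (F : Set (Finset G.V)) : Finset G.V :=
  Finset.univ.filter fun v => ∃ C ∈ F, v ∈ C

/-- The poset `𝓗^s_E = {S_E} ∪ {H_C : C ∈ 𝓒_E}`. -/
def HsE : Set (Finset G.V) :=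
  insert G.sinkSet {H | ∃ C ∈ G.cyclicComps, H = G.hsClosure C}

/-- An ideal of the poset `𝓗^s_E`. -/
def IsHsIdeal (I : Set (Finset G.V)) : Prop :=
  I.Nonempty ∧ I ⊆ G.HsE ∧ ∀ x ∈ I, ∀ y ∈ G.HsE, y ⊆ x → y ∈ I

lemma hsClosure_hereditary (X : Finset G.V) : G.Hereditary (G.hsClosure X) := by
  classical
  intro e he
  simp only [hsClosure, Finset.mem_filter, Finset.mem_univ, true_and] at he ⊢
  have he' := he
  exact fun H hher hsat hX => hher e (he' H hher hsat hX)

end DGraph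

/-! ### Auxiliary development for Statement 16 -/

namespace SPAux

open Multiset

section Generic

variable {M : Type} [AddCommMonoid M]

lemma cle_trans {x y z : M} (h1 : cle x y) (h2 : cle y z) : cle x z := by
  obtain ⟨a, ha⟩ := h1; obtain ⟨b, hb⟩ := h2
  exact ⟨a + b, by rw [hb, ha, add_assoc]⟩

lemma cle_nsmul {x y : M} (n : ℕ) (h : cle x y) : cle (n • x) (n • y) := by
  obtain ⟨a, ha⟩ := h
  exact ⟨n • a, by rw [ha, smul_add]⟩

lemma cle_idem_smul {f : M} (hf : f + f = f) : ∀ k : ℕ, cle (k • f) f := by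
  intro k
  induction k with
  | zero => exact ⟨f, by simp⟩
  | succ k ih =>
      obtain ⟨z, hz⟩ := ih
      refine ⟨z, ?_⟩
      calc f = f + f := hf.symm
        _ = (k • f + z) + f := by rw [← hz]
        _ = (k • f + f) + z := by abel
        _ = (k + 1) • f + z := by rw [succ_nsmul]

lemma idem_arch_unique {y e f : M} (he : e + e = e) (hf : f + f = f)
    (hye : archRel y e) (hyf : archRel y f) : e = f := by
  have hef : cle e f := by
    obtain ⟨n, hn⟩ := hye.2
    obtain ⟨m, hm⟩ := hyf.1
    exact cle_trans (cle_trans hn (cle_nsmul n hm))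
      (by rw [← mul_nsmul]; exact cle_idem_smul hf (m * n))
  have hfe : cle f e := by
    obtain ⟨n, hn⟩ := hyf.2
    obtain ⟨m, hm⟩ := hye.1
    exact cle_trans (cle_trans hn (cle_nsmul n hm))
      (by rw [← mul_nsmul]; exact cle_idem_smul he (m * n))
  obtain ⟨z, hz⟩ := hef
  obtain ⟨w, hw⟩ := hfe
  have h1 : e + f = e := by
    calc e + f = (f + w) + f := by rw [← hw]
      _ = (f + f) + w := by abel
      _ = f + w := by rw [hf]
      _ = e := hw.symm
  have h2 : e + f = f := by
    calc e + f = e + (e + z) := by rw [← hz]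
      _ = (e + e) + z := by abel
      _ = e + z := by rw [he]
      _ = f := hz.symm
  rw [← h1, h2]

lemma finite_exists_idem [Finite M] (y : M) :
    ∃ e : M, e + e = e ∧ archRel y e := by
  obtain ⟨i, j, hne, heq⟩ := Finite.exists_ne_map_eq_of_infinite (fun n : ℕ => (n + 1) • y)
  -- wlog i < j
  obtain ⟨i', j', hi1, hij, heq'⟩ : ∃ i' j' : ℕ, 1 ≤ i' ∧ i' < j' ∧ i' • y = j' • y := by
    rcases lt_or_gt_of_ne hne with h | h
    · exact ⟨i + 1, j + 1, by omega, by omega, heq⟩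
    · exact ⟨j + 1, i + 1, by omega, by omega, heq.symm⟩
  set p := j' - i' with hp
  have hp1 : 1 ≤ p := by omega
  have hshift : ∀ m : ℕ, (i' + m) • y = (i' + m + p) • y := by
    intro m
    have : i' + m + p = j' + m := by omega
    rw [this, add_nsmul, add_nsmul, heq']
  have hper : ∀ c m : ℕ, (i' + m) • y = (i' + m + c * p) • y := by
    intro c
    induction c with
    | zero => intro m; simp
    | succ c ih =>
        intro m
        have h1 := ih m
        have h2 := hshift (m + c * p)
        have e1 : i' + m + c * p = i' + (m + c * p) := by omega
        have e2 : i' + (m + c * p) + p = i' + m + (c + 1) * p := by ring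
        rw [h1, e1, h2, e2]
  set n := i' * p with hn
  have hni : i' ≤ n := Nat.le_mul_of_pos_right i' (by omega)
  have hn1 : 1 ≤ n := le_trans hi1 hni
  refine ⟨n • y, ?_, ?_, ?_⟩
  · have h := hper i' (n - i')
    have e1 : i' + (n - i') = n := by omega
    rw [e1, ← hn] at h
    rw [← add_nsmul, ← h]
  · refine ⟨1, (n - 1) • y, ?_⟩
    have e : n = 1 + (n - 1) := by omega
    rw [one_nsmul]
    conv_lhs => rw [e]
    rw [add_nsmul, one_nsmul]
  · exact ⟨n, 0, (add_zero _).symm⟩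

end Generic

section Graph

variable (G : DGraph) (s : G.V)

/-- `n`-step reachability. -/
def NStep : ℕ → G.V → G.V → Prop
  | 0, u, v => u = v
  | n + 1, u, v => ∃ w, G.Step u w ∧ NStep n w v

lemma nstep_snoc : ∀ {n : ℕ} {u w v : G.V}, NStep G n u w → G.Step w v → NStep G (n + 1) u v := by
  intro n
  induction n with
  | zero =>
      intro u w v h h'
      have h0 : u = w := h
      exact ⟨v, h0 ▸ h', rfl⟩
  | succ n ih =>
      intro u w v h h'
      obtain ⟨x, hx, hn⟩ := h
      exact ⟨x, hx, ih hn h'⟩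

lemma reaches_nstep {u v : G.V} (h : G.Reaches u v) : ∃ n, NStep G n u v := by
  induction h with
  | refl => exact ⟨0, rfl⟩
  | tail _ h2 ih => obtain ⟨n, hn⟩ := ih; exact ⟨n + 1, nstep_snoc G hn h2⟩

/-- Distance to the sink. -/
noncomputable def dist (v : G.V) : ℕ := sInf {n | NStep G n v s}

lemma dist_spec (hr : ∀ v : G.V, G.Reaches v s) (v : G.V) : NStep G (dist G s v) v s :=
  Nat.sInf_mem (reaches_nstep G (hr v))

lemma dist_le {v : G.V} {n : ℕ} (h : NStep G n v s) : dist G s v ≤ n := Nat.sInf_le h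

lemma exists_down_edge (hr : ∀ v : G.V, G.Reaches v s) (hs : G.IsSink s)
    {v : G.V} (hv : ¬ G.IsSink v) :
    ∃ e : G.E, G.src e = v ∧ dist G s (G.rng e) < dist G s v := by
  have hvs : v ≠ s := fun h => hv (h ▸ hs)
  have hd : dist G s v ≠ 0 := by
    intro h0
    have hspec := dist_spec G s hr v
    rw [h0] at hspec
    exact hvs hspec
  obtain ⟨k, hk⟩ := Nat.exists_eq_succ_of_ne_zero hd
  have hspec := dist_spec G s hr v
  rw [hk] at hspec
  obtain ⟨w, ⟨e, he1, he2⟩, hn⟩ := hspec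
  exact ⟨e, he1, by rw [he2]; exact lt_of_le_of_lt (dist_le G s hn) (by omega)⟩

/-- Maximal distance. -/
noncomputable def Dmax : ℕ := Finset.univ.sup (dist G s)

/-- A big base. -/
def Rbig : ℕ := Fintype.card G.E + 1

/-- The "toward-sink growth" function. -/
noncomputable def tf (v : G.V) : ℤ := (Rbig G : ℤ) ^ (Dmax G s - dist G s v)

noncomputable def Tbig : ℤ := (Rbig G : ℤ) ^ Dmax G s

/-- The potential per chip. -/
noncomputable def uf (v : G.V) : ℤ := Tbig G s - tf G s v

/-- The potential of a configuration. -/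
noncomputable def Phi (a : Multiset G.V) : ℤ := (a.map (uf G s)).sum

lemma one_le_R : (1 : ℤ) ≤ (Rbig G : ℤ) := by
  have : 1 ≤ Rbig G := Nat.le_add_left 1 _
  exact_mod_cast this

lemma one_le_tf (v : G.V) : 1 ≤ tf G s v := one_le_pow₀ (one_le_R G)

lemma tf_le_T (v : G.V) : tf G s v ≤ Tbig G s :=
  pow_le_pow_right₀ (one_le_R G) (Nat.sub_le _ _)

lemma uf_nonneg (v : G.V) : 0 ≤ uf G s v := sub_nonneg.mpr (tf_le_T G s v)

lemma Phi_nonneg (a : Multiset G.V) : 0 ≤ Phi G s a := by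
  apply Multiset.sum_nonneg
  intro x hx
  obtain ⟨v, _, rfl⟩ := Multiset.mem_map.mp hx
  exact uf_nonneg G s v

lemma Phi_add (a b : Multiset G.V) : Phi G s (a + b) = Phi G s a + Phi G s b := by
  simp [Phi, Multiset.map_add, Multiset.sum_add]

lemma Phi_replicate (n : ℕ) (v : G.V) :
    Phi G s (Multiset.replicate n v) = (n : ℤ) * uf G s v := by
  simp [Phi, Multiset.map_replicate, Multiset.sum_replicate, nsmul_eq_mul]

lemma key_ineq (hr : ∀ v : G.V, G.Reaches v s) (hs : G.IsSink s)
    {v : G.V} (hv : ¬ G.IsSink v) :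
    Phi G s ((G.outEdges v).val.map G.rng) + 1 ≤ ((G.outEdges v).card : ℤ) * uf G s v := by
  classical
  obtain ⟨e₀, he₀, hlt⟩ := exists_down_edge G s hr hs hv
  have he₀mem : e₀ ∈ G.outEdges v := by
    simp [DGraph.outEdges, he₀]
  set d : ℕ := (G.outEdges v).card with hd
  have hd1 : 1 ≤ d := Finset.card_pos.mpr ⟨e₀, he₀mem⟩
  have hdE : (d : ℤ) + 1 ≤ (Rbig G : ℤ) := by
    have h1 : d ≤ Fintype.card G.E := by
      calc d ≤ Finset.univ.card := Finset.card_filter_le _ _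
        _ = Fintype.card G.E := Finset.card_univ
    have : d + 1 ≤ Rbig G := by simp only [Rbig]; omega
    exact_mod_cast this
  have hPhi : Phi G s ((G.outEdges v).val.map G.rng)
      = (d : ℤ) * Tbig G s - ((G.outEdges v).val.map (fun e => tf G s (G.rng e))).sum := by
    have hmm : ((G.outEdges v).val.map G.rng).map (uf G s)
        = (G.outEdges v).val.map (fun e => Tbig G s - tf G s (G.rng e)) := by
      rw [Multiset.map_map]; rfl
    rw [Phi, hmm, Multiset.sum_map_sub]
    congr 1
    rw [Multiset.map_const', Multiset.sum_replicate]
    simp [hd, nsmul_eq_mul]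
  set S : ℤ := ((G.outEdges v).val.map (fun e => tf G s (G.rng e))).sum with hS
  have hsplit : S = tf G s (G.rng e₀)
      + (((G.outEdges v).val.erase e₀).map (fun e => tf G s (G.rng e))).sum := by
    conv_lhs => rw [hS, show (G.outEdges v).val = e₀ ::ₘ (G.outEdges v).val.erase e₀ from
      (Multiset.cons_erase he₀mem).symm]
    rw [Multiset.map_cons, Multiset.sum_cons]
  have hrest : ((d : ℤ) - 1)
      ≤ (((G.outEdges v).val.erase e₀).map (fun e => tf G s (G.rng e))).sum := by
    have hall : ∀ x ∈ ((G.outEdges v).val.erase e₀).map (fun e => tf G s (G.rng e)),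
        (1 : ℤ) ≤ x := by
      intro x hx
      obtain ⟨e, _, rfl⟩ := Multiset.mem_map.mp hx
      exact one_le_tf G s _
    have hcard : Multiset.card (((G.outEdges v).val.erase e₀).map
        (fun e => tf G s (G.rng e))) = d - 1 := by
      rw [Multiset.card_map, Multiset.card_erase_of_mem he₀mem]
      rfl
    have := Multiset.card_nsmul_le_sum hall
    rw [hcard] at this
    have hcast : ((d - 1 : ℕ) : ℤ) = (d : ℤ) - 1 := by omega
    calc ((d : ℤ) - 1) = ((d - 1 : ℕ) : ℤ) := hcast.symm
      _ = (d - 1 : ℕ) • (1 : ℤ) := by rw [nsmul_eq_mul, mul_one]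
      _ ≤ _ := this
  have ht₀ : (Rbig G : ℤ) * tf G s v ≤ tf G s (G.rng e₀) := by
    have hvD : dist G s v ≤ Dmax G s := Finset.le_sup (Finset.mem_univ v)
    have hexp : Dmax G s - dist G s v + 1 ≤ Dmax G s - dist G s (G.rng e₀) := by omega
    calc (Rbig G : ℤ) * tf G s v = (Rbig G : ℤ) ^ (Dmax G s - dist G s v + 1) := by
          rw [tf, pow_succ]; ring
      _ ≤ tf G s (G.rng e₀) := pow_le_pow_right₀ (one_le_R G) hexp
  have h1 : (1 : ℤ) ≤ tf G s v := one_le_tf G s v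
  have hmul : ((d : ℤ) + 1) * tf G s v ≤ (Rbig G : ℤ) * tf G s v :=
    mul_le_mul_of_nonneg_right hdE (by linarith)
  have hdz : (1 : ℤ) ≤ (d : ℤ) := by exact_mod_cast hd1
  rw [hPhi, uf]
  nlinarith [hsplit, hrest, ht₀, hmul]

lemma step_measure (hr : ∀ v : G.V, G.Reaches v s) (hs : G.IsSink s)
    {a b : Multiset G.V} (h : G.step1 s a b) :
    Phi G s b + (Multiset.card b : ℤ) < Phi G s a + (Multiset.card a : ℤ) := by
  classical
  rcases h with ⟨hsa, hb⟩ | ⟨v, hv, hcnt, hb⟩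
  · have hsum : b + a.filter (fun v => ¬ v ≠ s) = a := by
      rw [hb]; exact Multiset.filter_add_not _ a
    have hcard : Multiset.card b < Multiset.card a := by
      have hmem : s ∈ a.filter (fun v => ¬ v ≠ s) :=
        Multiset.mem_filter.mpr ⟨hsa, by simp⟩
      have hpos : 0 < Multiset.card (a.filter (fun v => ¬ v ≠ s)) :=
        Multiset.card_pos_iff_exists_mem.mpr ⟨s, hmem⟩
      have := congrArg Multiset.card hsum
      rw [Multiset.card_add] at this
      omega
    have hPhi : Phi G s b ≤ Phi G s a := by
      rw [← hsum, Phi_add]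
      have := Phi_nonneg G s (a.filter (fun v => ¬ v ≠ s))
      linarith
    have : (Multiset.card b : ℤ) < (Multiset.card a : ℤ) := by exact_mod_cast hcard
    linarith
  · have hrep : Multiset.replicate (G.outEdges v).card v ≤ a :=
      Multiset.le_count_iff_replicate_le.mp hcnt
    have ha : a - Multiset.replicate (G.outEdges v).card v
        + Multiset.replicate (G.outEdges v).card v = a := tsub_add_cancel_of_le hrep
    have hPa : Phi G s a = Phi G s (a - Multiset.replicate (G.outEdges v).card v)
        + ((G.outEdges v).card : ℤ) * uf G s v := by
      conv_lhs => rw [← ha]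
      rw [Phi_add, Phi_replicate]
    have hPb : Phi G s b = Phi G s (a - Multiset.replicate (G.outEdges v).card v)
        + Phi G s ((G.outEdges v).val.map G.rng) := by
      rw [hb, Phi_add]
    have hkey := key_ineq G s hr hs hv
    have hcard : Multiset.card b = Multiset.card a := by
      have h1 : Multiset.card (Multiset.replicate (G.outEdges v).card v)
          ≤ Multiset.card a := Multiset.card_le_card hrep
      rw [Multiset.card_replicate] at h1
      rw [hb, Multiset.card_add, Multiset.card_sub hrep, Multiset.card_map,
        Multiset.card_replicate]
      have : Multiset.card (G.outEdges v).val = (G.outEdges v).card := rfl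
      omega
    rw [hcard]
    linarith

/-- A stable configuration. -/
def Stable (a : Multiset G.V) : Prop :=
  s ∉ a ∧ ∀ v : G.V, ¬ G.IsSink v → a.count v < (G.outEdges v).card

lemma toNat_lt_of {x y : ℤ} {n : ℕ} (h0 : 0 ≤ x) (h : x < y) (hY : y.toNat ≤ n) :
    x.toNat < n := by omega

lemma exists_stable_aux (hr : ∀ v : G.V, G.Reaches v s) (hs : G.IsSink s) :
    ∀ n : ℕ, ∀ a : Multiset G.V, (Phi G s a + (Multiset.card a : ℤ)).toNat ≤ n →
      ∃ b, G.Transforms s a b ∧ Stable G s b := by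
  classical
  intro n
  induction n using Nat.strong_induction_on with
  | _ n ih =>
    intro a hle
    by_cases hsa : s ∈ a
    · set b := a.filter (fun v => v ≠ s) with hbdef
      have hstep : G.step1 s a b := Or.inl ⟨hsa, rfl⟩
      have hm := step_measure G s hr hs hstep
      have hb0 : 0 ≤ Phi G s b + (Multiset.card b : ℤ) := by
        have h1 := Phi_nonneg G s b
        have h2 : (0 : ℤ) ≤ (Multiset.card b : ℤ) := Int.natCast_nonneg _
        linarith
      have hlt : (Phi G s b + (Multiset.card b : ℤ)).toNat < n :=
        toNat_lt_of hb0 hm hle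
      obtain ⟨c, hc, hcs⟩ := ih _ hlt b le_rfl
      exact ⟨c, Relation.ReflTransGen.head hstep hc, hcs⟩
    · by_cases htop : ∃ v, ¬ G.IsSink v ∧ (G.outEdges v).card ≤ a.count v
      · obtain ⟨v, hv, hcnt⟩ := htop
        set b := (a - Multiset.replicate (G.outEdges v).card v)
          + (G.outEdges v).val.map G.rng with hbdef
        have hstep : G.step1 s a b := Or.inr ⟨v, hv, hcnt, rfl⟩
        have hm := step_measure G s hr hs hstep
        have hb0 : 0 ≤ Phi G s b + (Multiset.card b : ℤ) := by
          have h1 := Phi_nonneg G s b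
          have h2 : (0 : ℤ) ≤ (Multiset.card b : ℤ) := Int.natCast_nonneg _
          linarith
        have hlt : (Phi G s b + (Multiset.card b : ℤ)).toNat < n :=
          toNat_lt_of hb0 hm hle
        obtain ⟨c, hc, hcs⟩ := ih _ hlt b le_rfl
        exact ⟨c, Relation.ReflTransGen.head hstep hc, hcs⟩
      · push_neg at htop
        exact ⟨a, Relation.ReflTransGen.refl, hsa, fun v hv => htop v hv⟩

lemma exists_stable (hr : ∀ v : G.V, G.Reaches v s) (hs : G.IsSink s) (a : Multiset G.V) :
    ∃ b, G.Transforms s a b ∧ Stable G s b :=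
  exists_stable_aux G s hr hs _ a le_rfl

/-! #### Toppling preserves the class in `SP(E)` -/

lemma spMk_eq_of_rel {a b : Multiset G.V} (h : G.spRel s a b) :
    G.spMk s a = G.spMk s b :=
  (AddCon.eq _).mpr (AddConGen.Rel.of a b h)

lemma spMk_add (a b : Multiset G.V) : G.spMk s (a + b) = G.spMk s a + G.spMk s b :=
  map_add _ a b

lemma spMk_sink_const : ∀ c : Multiset G.V, (∀ x ∈ c, x = s) → G.spMk s c = 0 := by
  intro c
  induction c using Multiset.induction with
  | empty => intro _; exact map_zero _
  | cons a c ih =>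
      intro hall
      have ha : a = s := hall a (Multiset.mem_cons_self a c)
      have hc : ∀ x ∈ c, x = s := fun x hx => hall x (Multiset.mem_cons_of_mem hx)
      rw [← Multiset.singleton_add, spMk_add, ih hc, add_zero, ha]
      have h0 : G.spMk s {s} = G.spMk s 0 := spMk_eq_of_rel G s (Or.inl ⟨rfl, rfl⟩)
      rw [h0]
      exact map_zero _

lemma spMk_step {a b : Multiset G.V} (h : G.step1 s a b) : G.spMk s a = G.spMk s b := by
  classical
  rcases h with ⟨hsa, hb⟩ | ⟨v, hv, hcnt, hb⟩
  · have hsum : b + a.filter (fun v => ¬ v ≠ s) = a := by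
      rw [hb]; exact Multiset.filter_add_not _ a
    have hall : ∀ x ∈ a.filter (fun v => ¬ v ≠ s), x = s := by
      intro x hx
      have := (Multiset.mem_filter.mp hx).2
      simpa using this
    calc G.spMk s a = G.spMk s (b + a.filter (fun v => ¬ v ≠ s)) := by rw [hsum]
      _ = G.spMk s b + G.spMk s (a.filter (fun v => ¬ v ≠ s)) := spMk_add G s _ _
      _ = G.spMk s b + 0 := by rw [spMk_sink_const G s _ hall]
      _ = G.spMk s b := add_zero _
  · have hrep : Multiset.replicate (G.outEdges v).card v ≤ a :=
      Multiset.le_count_iff_replicate_le.mp hcnt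
    have ha : a - Multiset.replicate (G.outEdges v).card v
        + Multiset.replicate (G.outEdges v).card v = a := tsub_add_cancel_of_le hrep
    have hrel : G.spMk s (Multiset.replicate (G.outEdges v).card v)
        = G.spMk s ((G.outEdges v).val.map G.rng) :=
      spMk_eq_of_rel G s (Or.inr ⟨v, hv, rfl, rfl⟩)
    calc G.spMk s a
        = G.spMk s (a - Multiset.replicate (G.outEdges v).card v
            + Multiset.replicate (G.outEdges v).card v) := by rw [ha]
      _ = G.spMk s (a - Multiset.replicate (G.outEdges v).card v)
            + G.spMk s (Multiset.replicate (G.outEdges v).card v) := spMk_add G s _ _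
      _ = G.spMk s (a - Multiset.replicate (G.outEdges v).card v)
            + G.spMk s ((G.outEdges v).val.map G.rng) := by rw [hrel]
      _ = G.spMk s b := by rw [← spMk_add, ← hb]

lemma spMk_transforms {a b : Multiset G.V} (h : G.Transforms s a b) :
    G.spMk s a = G.spMk s b := by
  induction h with
  | refl => rfl
  | tail _ h2 ih => rw [ih, spMk_step G s h2]

lemma finite_SP (hG : G.IsSandpile s) : Finite (G.SP s) := by
  classical
  obtain ⟨hs, huniq, hr⟩ := hG
  apply Finite.of_surjective (fun f : G.V → Fin (Fintype.card G.E + 1) =>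
    G.spMk s (∑ v : G.V, Multiset.replicate (f v).1 v))
  intro x
  obtain ⟨a, rfl⟩ := AddCon.mk'_surjective (c := G.spCon s) x
  obtain ⟨b, htr, hb1, hb2⟩ := exists_stable G s hr hs a
  have hbound : ∀ v : G.V, b.count v < Fintype.card G.E + 1 := by
    intro v
    by_cases hv : G.IsSink v
    · have hvs : v = s := huniq v hv
      have : b.count v = 0 := Multiset.count_eq_zero.mpr (hvs ▸ hb1)
      omega
    · have h1 := hb2 v hv
      have h2 : (G.outEdges v).card ≤ Fintype.card G.E := by
        calc (G.outEdges v).card ≤ Finset.univ.card := Finset.card_filter_le _ _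
          _ = Fintype.card G.E := Finset.card_univ
      omega
  refine ⟨fun v => ⟨b.count v, hbound v⟩, ?_⟩
  have hsum : (∑ v : G.V, Multiset.replicate (b.count v) v) = b := by
    ext w
    rw [Multiset.count_sum']
    simp only [Multiset.count_replicate]
    rw [Finset.sum_ite_eq' Finset.univ w (fun v => Multiset.count v b)]
    simp
  show G.spMk s _ = G.spMk s a
  rw [hsum]
  exact (spMk_transforms G s htr).symm

end Graph


end SPAux
/-- `SP(E)` is the disjoint union of the archimedean classes of its
idempotents: every element is archimedean-equivalent to exactly one idempotent. -/
theorem sp_disjoint_union_archClasses (G : DGraph) (s : G.V) (hG : G.IsSandpile s)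
    (y : G.SP s) :
    ∃! e : G.SP s, e + e = e ∧ archRel y e := by
  have : Finite (G.SP s) := SPAux.finite_SP G s hG
  obtain ⟨e, he, harch⟩ := SPAux.finite_exists_idem y
  exact ⟨e, ⟨he, harch⟩, fun f hf => SPAux.idem_arch_unique hf.1 he hf.2 harch⟩
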